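/- Let S = [[1 + i, −j], [j, 1 + i]] be the Budapest switch over the real quaternions ℍ. Define the lower triangular n×n matrices 𝓑_n over ℍ inductively by 𝓑_1 = (1), and, if 𝓑_{n−1} has bottom row (x_1, …, x_{n−1}), then 𝓑_n is obtained from 𝓑_{n−1} by adjoining a zero last column and the new bottom row (y_1, …, y_n) where y_m = k·x_m for 1 ≤ m ≤ n−2, y_{n−1} = (k − j)·x_{n−1}, and y_n = j·x_{n−1}. Then for every n ≥ 2 the matrix 𝓑_n is invertible and, for every 1 ≤ i ≤ n−1, S_i 𝓑_n = 𝓑_n D_i, where S_i is the n×n identity matrix except that its 2×2 submatrix in rows and columns i, i+1 is S, and D_i is the n×n identity matrix except that its 2×2 submatrix in rows and columns i, i+1 is [[0, 1], [−1, 2]] (the Burau matrix with variable −1). -/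

import Mathlib

open Quaternion

/-- The quaternion `i`. -/
noncomputable def qi : ℍ[ℝ] := ⟨0, 1, 0, 0⟩

/-- The quaternion `j`. -/
noncomputable def qj : ℍ[ℝ] := ⟨0, 0, 1, 0⟩

/-- The quaternion `k`. -/
noncomputable def qk : ℍ[ℝ] := ⟨0, 0, 0, 1⟩

/-- The `n×n` matrix over `R` which is the identity except that its 2×2 submatrix
in rows and columns `i, i+1` (0-based) is `[[A, B], [C, D]]`. -/
def blockAt {R : Type*} [Ring R] (n : ℕ) (i : ℕ) (A B C D : R) :
    Matrix (Fin n) (Fin n) R := fun p q =>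
  if (p : ℕ) = i ∧ (q : ℕ) = i then A
  else if (p : ℕ) = i ∧ (q : ℕ) = i + 1 then B
  else if (p : ℕ) = i + 1 ∧ (q : ℕ) = i then C
  else if (p : ℕ) = i + 1 ∧ (q : ℕ) = i + 1 then D
  else if p = q then 1 else 0

/-- The bottom row `(y_1, …, y_{m+1})` of the matrix `𝓑_{m+1}`: the bottom row of
`𝓑_1 = (1)` is `(1)`; if the bottom row of `𝓑_{n−1}` is `(x_1, …, x_{n−1})`, the
bottom row of `𝓑_n` is `(y_1, …, y_n)` with `y_m = k·x_m` for `m ≤ n−2`,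
`y_{n−1} = (k − j)·x_{n−1}` and `y_n = j·x_{n−1}`. -/
noncomputable def brow : (m : ℕ) → Fin (m + 1) → ℍ[ℝ]
  | 0, _ => 1
  | m + 1, c =>
    if h : (c : ℕ) < m then qk * brow m ⟨(c : ℕ), by omega⟩
    else if (c : ℕ) = m then (qk - qj) * brow m ⟨m, by omega⟩
    else qj * brow m ⟨m, by omega⟩

/-- The lower triangular matrix `𝓑_n`: row `r` (0-based) consists of the bottom row
of `𝓑_{r+1}` followed by zeros; equivalently `𝓑_n` is obtained from `𝓑_{n−1}` by
adjoining a zero last column and the new bottom row described in `brow`. -/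
noncomputable def Bmat (n : ℕ) : Matrix (Fin n) (Fin n) ℍ[ℝ] := fun r c =>
  if h : (c : ℕ) ≤ (r : ℕ) then brow (r : ℕ) ⟨(c : ℕ), by omega⟩ else 0

/-! ### Auxiliary lemmas about `brow` and `Bmat` -/

@[simp] lemma qi_re : qi.re = 0 := rfl
@[simp] lemma qi_imI : qi.imI = 1 := rfl
@[simp] lemma qi_imJ : qi.imJ = 0 := rfl
@[simp] lemma qi_imK : qi.imK = 0 := rfl
@[simp] lemma qj_re : qj.re = 0 := rfl
@[simp] lemma qj_imI : qj.imI = 0 := rfl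
@[simp] lemma qj_imJ : qj.imJ = 1 := rfl
@[simp] lemma qj_imK : qj.imK = 0 := rfl
@[simp] lemma qk_re : qk.re = 0 := rfl
@[simp] lemma qk_imI : qk.imI = 0 := rfl
@[simp] lemma qk_imJ : qk.imJ = 0 := rfl
@[simp] lemma qk_imK : qk.imK = 1 := rfl

lemma hj0 : qj ≠ 0 := by
  intro h; have := congrArg QuaternionAlgebra.imJ h; simp [qj] at this

lemma brow_congr {m m' c c' : ℕ} (hm : m = m') (hc : c = c')
    (h1 : c < m + 1) (h2 : c' < m' + 1) : brow m ⟨c, h1⟩ = brow m' ⟨c', h2⟩ := by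
  subst hm; subst hc; rfl

lemma brow_eq_of_lt (m c : ℕ) (h : c < m) (h1 : c < m + 2) (h2 : c < m + 1) :
    brow (m + 1) ⟨c, h1⟩ = qk * brow m ⟨c, h2⟩ := by
  simp [brow, h]

lemma brow_eq_of_eq (m : ℕ) (h1 : m < m + 2) :
    brow (m + 1) ⟨m, h1⟩ = (qk - qj) * brow m ⟨m, by omega⟩ := by
  simp [brow]

lemma brow_last (m : ℕ) :
    brow (m + 1) ⟨m + 1, by omega⟩ = qj * brow m ⟨m, by omega⟩ := by
  simp [brow]

lemma brow_diag_ne (m : ℕ) : brow m ⟨m, by omega⟩ ≠ 0 := by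
  induction m with
  | zero => simp [brow, Quaternion.ext_iff]
  | succ m ih =>
    rw [brow_last]
    exact mul_ne_zero hj0 ih

/-- The alternation lemma: for `p ≥ i + 2`, `brow p i = - brow p (i+1)`. -/
lemma brow_alt (i : ℕ) : ∀ p : ℕ, ∀ hp : i + 2 ≤ p, ∀ (h1 : i < p + 1) (h2 : i + 1 < p + 1),
    brow p ⟨i, h1⟩ = - brow p ⟨i + 1, h2⟩ := by
  intro p
  induction p with
  | zero => omega
  | succ p ih =>
    intro hp h1 h2
    rcases Nat.lt_or_ge p (i + 2) with h | h
    · -- p + 1 = i + 2, base case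
      have hpe : p = i + 1 := by omega
      subst hpe
      rw [brow_eq_of_lt (i + 1) i (by omega) (by omega) (by omega),
          brow_eq_of_eq (i + 1) (by omega)]
      rw [brow_eq_of_eq i (by omega), brow_last i]
      rw [← mul_assoc, ← mul_assoc,
        show qk * (qk - qj) = -((qk - qj) * qj) from by ext <;> simp [Quaternion.re_mul, Quaternion.imI_mul, Quaternion.imJ_mul, Quaternion.imK_mul], neg_mul]
    · -- p ≥ i + 2, inductive step
      rw [brow_eq_of_lt p i (by omega) (by omega) (by omega),
          brow_eq_of_lt p (i + 1) (by omega) (by omega) (by omega),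
          ih h (by omega) (by omega), mul_neg]

lemma Bmat_apply_le {n : ℕ} (r c : ℕ) (hr : r < n) (hc : c < n) (h : c ≤ r) :
    Bmat n ⟨r, hr⟩ ⟨c, hc⟩ = brow r ⟨c, by omega⟩ := by
  simp [Bmat, h]

lemma Bmat_apply_gt {n : ℕ} (r c : ℕ) (hr : r < n) (hc : c < n) (h : ¬ c ≤ r) :
    Bmat n ⟨r, hr⟩ ⟨c, hc⟩ = 0 := by
  simp [Bmat, h]

/-! ### Multiplication by `blockAt` -/

section Aux

variable {R : Type*} [Ring R] {n : ℕ}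

lemma sum_split (a b : Fin n) (hab : a ≠ b) (f : Fin n → R)
    (h : ∀ r, r ≠ a → r ≠ b → f r = 0) : ∑ r, f r = f a + f b := by
  have key : ∀ r : Fin n, f r = (if r = a then f a else 0) + (if r = b then f b else 0) := by
    intro r
    by_cases h1 : r = a
    · subst h1; simp [hab]
    · by_cases h2 : r = b
      · subst h2; simp [h1]
      · simp [h1, h2, h r h1 h2]
  rw [Finset.sum_congr rfl fun r _ => key r, Finset.sum_add_distrib]
  simp

lemma blockAt_mul_apply (i : ℕ) (hi : i + 1 < n) (A B C D : R)
    (M : Matrix (Fin n) (Fin n) R) (p q : Fin n) :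
    (blockAt n i A B C D * M) p q =
      if (p : ℕ) = i then A * M ⟨i, by omega⟩ q + B * M ⟨i + 1, hi⟩ q
      else if (p : ℕ) = i + 1 then C * M ⟨i, by omega⟩ q + D * M ⟨i + 1, hi⟩ q
      else M p q := by
  rw [Matrix.mul_apply]
  by_cases hp : (p : ℕ) = i
  · rw [if_pos hp]
    rw [sum_split ⟨i, by omega⟩ ⟨i + 1, hi⟩ (by simp [Fin.ext_iff])
        (fun r => blockAt n i A B C D p r * M r q) ?_]
    · simp [blockAt, hp]
    · intro r h1 h2
      have h1' : (r : ℕ) ≠ i := fun h => h1 (Fin.ext h)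
      have h2' : (r : ℕ) ≠ i + 1 := fun h => h2 (Fin.ext h)
      have hpr : p ≠ r := fun h => h1' (by rw [← h, hp])
      simp [blockAt, hp, h1', h2', hpr]
  · rw [if_neg hp]
    by_cases hp2 : (p : ℕ) = i + 1
    · rw [if_pos hp2]
      rw [sum_split ⟨i, by omega⟩ ⟨i + 1, hi⟩ (by simp [Fin.ext_iff])
          (fun r => blockAt n i A B C D p r * M r q) ?_]
      · simp [blockAt, hp, hp2]
      · intro r h1 h2
        have h1' : (r : ℕ) ≠ i := fun h => h1 (Fin.ext h)
        have h2' : (r : ℕ) ≠ i + 1 := fun h => h2 (Fin.ext h)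
        have hpr : p ≠ r := fun h => h2' (by rw [← h, hp2])
        simp [blockAt, hp, hp2, h1', h2', hpr]
    · rw [if_neg hp2]
      have : ∀ r : Fin n, blockAt n i A B C D p r * M r q
          = if p = r then M r q else 0 := by
        intro r
        by_cases hpr : p = r
        · subst hpr; simp [blockAt, hp, hp2]
        · simp [blockAt, hp, hp2, hpr]
      rw [Finset.sum_congr rfl fun r _ => this r]
      simp

lemma mul_blockAt_apply (i : ℕ) (hi : i + 1 < n) (A B C D : R)
    (M : Matrix (Fin n) (Fin n) R) (p q : Fin n) :
    (M * blockAt n i A B C D) p q =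
      if (q : ℕ) = i then M p ⟨i, by omega⟩ * A + M p ⟨i + 1, hi⟩ * C
      else if (q : ℕ) = i + 1 then M p ⟨i, by omega⟩ * B + M p ⟨i + 1, hi⟩ * D
      else M p q := by
  rw [Matrix.mul_apply]
  by_cases hq : (q : ℕ) = i
  · rw [if_pos hq]
    rw [sum_split ⟨i, by omega⟩ ⟨i + 1, hi⟩ (by simp [Fin.ext_iff])
        (fun r => M p r * blockAt n i A B C D r q) ?_]
    · simp [blockAt, hq]
    · intro r h1 h2
      have h1' : (r : ℕ) ≠ i := fun h => h1 (Fin.ext h)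
      have h2' : (r : ℕ) ≠ i + 1 := fun h => h2 (Fin.ext h)
      have hrq : r ≠ q := fun h => h1' (by rw [h, hq])
      simp [blockAt, hq, h1', h2', hrq]
  · rw [if_neg hq]
    by_cases hq2 : (q : ℕ) = i + 1
    · rw [if_pos hq2]
      rw [sum_split ⟨i, by omega⟩ ⟨i + 1, hi⟩ (by simp [Fin.ext_iff])
          (fun r => M p r * blockAt n i A B C D r q) ?_]
      · simp [blockAt, hq, hq2]
      · intro r h1 h2
        have h1' : (r : ℕ) ≠ i := fun h => h1 (Fin.ext h)
        have h2' : (r : ℕ) ≠ i + 1 := fun h => h2 (Fin.ext h)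
        have hrq : r ≠ q := fun h => h2' (by rw [h, hq2])
        simp [blockAt, hq, hq2, h1', h2', hrq]
    · rw [if_neg hq2]
      have : ∀ r : Fin n, M p r * blockAt n i A B C D r q
          = if r = q then M p r else 0 := by
        intro r
        by_cases hrq : r = q
        · subst hrq; simp [blockAt, hq, hq2]
        · simp [blockAt, hq, hq2, hrq]
      rw [Finset.sum_congr rfl fun r _ => this r]
      simp

lemma isUnit_submatrix_equiv {m' n' : Type*} [Fintype m'] [Fintype n']
    [DecidableEq m'] [DecidableEq n'] (e : m' ≃ n') (M : Matrix n' n' R)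
    (h : IsUnit M) : IsUnit (M.submatrix e e) := by
  have h' : Invertible M := h.nonempty_invertible.some
  have : Invertible (M.submatrix e e) :=
    ⟨(⅟ M).submatrix e e,
      by rw [Matrix.submatrix_mul_equiv, invOf_mul_self, Matrix.submatrix_one_equiv],
      by rw [Matrix.submatrix_mul_equiv, mul_invOf_self, Matrix.submatrix_one_equiv]⟩
  exact isUnit_of_invertible _

end Aux

/-- `Bmat (n+1)` is a unit, by induction using block decomposition. -/
lemma bmat_isUnit : ∀ n : ℕ, IsUnit (Bmat (n + 1)) := by
  intro n
  induction n with
  | zero =>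
    have h1 : Bmat 1 = 1 := by
      refine Matrix.ext fun r c => ?_
      fin_cases r; fin_cases c
      simp [Bmat, brow, Matrix.one_apply]
    rw [h1]
    exact isUnit_one
  | succ n ih =>
    set A : Matrix (Fin (n + 1)) (Fin (n + 1)) ℍ[ℝ] := Bmat (n + 1) with hA
    set C : Matrix (Fin 1) (Fin (n + 1)) ℍ[ℝ] :=
      fun _ c => brow (n + 1) ⟨(c : ℕ), by omega⟩ with hC
    set D : Matrix (Fin 1) (Fin 1) ℍ[ℝ] :=
      fun _ _ => brow (n + 1) ⟨n + 1, by omega⟩ with hD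
    have hd : brow (n + 1) ⟨n + 1, by omega⟩ ≠ 0 := brow_diag_ne (n + 1)
    have hDinv : Invertible D := by
      refine ⟨(fun _ _ => (brow (n + 1) ⟨n + 1, by omega⟩)⁻¹ : Matrix (Fin 1) (Fin 1) ℍ[ℝ]),
        ?_, ?_⟩
      · refine Matrix.ext fun a b => ?_
        fin_cases a; fin_cases b
        erw [Matrix.mul_apply]
        simp [hD, Matrix.mul_apply, inv_mul_cancel₀ hd, Matrix.one_apply]
      · refine Matrix.ext fun a b => ?_
        fin_cases a; fin_cases b
        erw [Matrix.mul_apply]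
        simp [hD, Matrix.mul_apply, mul_inv_cancel₀ hd, Matrix.one_apply]
    have hAinv : Invertible A := ih.nonempty_invertible.some
    have hblock : Invertible (Matrix.fromBlocks A 0 C D) := by
      refine ⟨Matrix.fromBlocks (⅟ A) 0 (-(⅟ D * C * ⅟ A)) (⅟ D), ?_, ?_⟩
      · rw [Matrix.fromBlocks_multiply]
        simp only [Matrix.mul_zero, Matrix.zero_mul, zero_add, add_zero, neg_zero,
          Matrix.neg_mul, Matrix.mul_neg, Matrix.mul_assoc, invOf_mul_self,
          Matrix.mul_one, neg_add_cancel, Matrix.fromBlocks_one]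
      · rw [Matrix.fromBlocks_multiply]
        simp only [Matrix.mul_zero, Matrix.zero_mul, zero_add, add_zero, neg_zero,
          Matrix.neg_mul, Matrix.mul_neg, Matrix.mul_assoc, mul_invOf_self,
          Matrix.mul_invOf_cancel_left, add_neg_cancel, Matrix.fromBlocks_one]
    have key : (Bmat (n + 2)).submatrix
          (finSumFinEquiv : Fin (n + 1) ⊕ Fin 1 ≃ Fin (n + 2))
          (finSumFinEquiv : Fin (n + 1) ⊕ Fin 1 ≃ Fin (n + 2))
        = Matrix.fromBlocks A 0 C D := by
      refine Matrix.ext fun r c => ?_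
      rcases r with a | a <;> rcases c with b | b
      · simp only [Matrix.submatrix_apply, finSumFinEquiv_apply_left,
          Matrix.fromBlocks_apply₁₁]
        simp [Bmat, hA]
      · -- row in top block, column in last block: entry is 0
        have hb0 : b = 0 := Subsingleton.elim _ _
        subst hb0
        simp only [Matrix.submatrix_apply, finSumFinEquiv_apply_left,
          finSumFinEquiv_apply_right, Matrix.fromBlocks_apply₁₂, Matrix.zero_apply]
        have hlt : ¬ ((Fin.natAdd (n + 1) (0 : Fin 1) : Fin (n + 2)) : ℕ)
            ≤ ((Fin.castAdd 1 a : Fin (n + 2)) : ℕ) := by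
          simp only [Fin.coe_natAdd, Fin.coe_castAdd, Fin.val_zero]
          omega
        simp [Bmat, hlt]
        exact fun h => absurd h (by omega)
      · -- row in last block, column in top block
        have ha0 : a = 0 := Subsingleton.elim _ _
        subst ha0
        simp only [Matrix.submatrix_apply, finSumFinEquiv_apply_left,
          finSumFinEquiv_apply_right, Matrix.fromBlocks_apply₂₁, hC]
        have hle : ((Fin.castAdd 1 b : Fin (n + 2)) : ℕ)
            ≤ ((Fin.natAdd (n + 1) (0 : Fin 1) : Fin (n + 2)) : ℕ) := by
          simp only [Fin.coe_natAdd, Fin.coe_castAdd, Fin.val_zero]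
          omega
        simp only [Bmat, hle, dif_pos]
        exact brow_congr (by simp) (by simp) _ _
      · -- bottom-right corner
        have ha0 : a = 0 := Subsingleton.elim _ _
        have hb0 : b = 0 := Subsingleton.elim _ _
        subst ha0; subst hb0
        simp only [Matrix.submatrix_apply, finSumFinEquiv_apply_right,
          Matrix.fromBlocks_apply₂₂, hD]
        have hle : ((Fin.natAdd (n + 1) (0 : Fin 1) : Fin (n + 2)) : ℕ)
            ≤ ((Fin.natAdd (n + 1) (0 : Fin 1) : Fin (n + 2)) : ℕ) := le_refl _
        simp only [Bmat, hle, dif_pos]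
        exact brow_congr (by simp) (by simp) _ _
    have h2 : Bmat (n + 2)
        = (Matrix.fromBlocks A 0 C D).submatrix
            (finSumFinEquiv : Fin (n + 1) ⊕ Fin 1 ≃ Fin (n + 2)).symm
            (finSumFinEquiv : Fin (n + 1) ⊕ Fin 1 ≃ Fin (n + 2)).symm := by
      rw [← key, Matrix.submatrix_submatrix]
      simp only [Equiv.self_comp_symm]
      rfl
    rw [h2]
    exact isUnit_submatrix_equiv _ _ (isUnit_of_invertible _)

/-- For the Budapest switch `S = [[1 + i, −j], [j, 1 + i]]` over ℍ and
every `n ≥ 2`, the matrix `𝓑_n` is invertible and `Sᵢ 𝓑_n = 𝓑_n Dᵢ` for all `i`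
with `i + 1 < n` (0-based), where `Sᵢ` is the identity with 2×2 block `S` at
rows/columns `i, i+1` and `Dᵢ` is the identity with block `[[0, 1], [−1, 2]]`
(the Burau matrix with variable −1) there. -/
theorem stmt_18 (n : ℕ) (hn : 2 ≤ n) :
    IsUnit (Bmat n) ∧
    ∀ i : ℕ, i + 1 < n →
      blockAt n i (1 + qi) (-qj) qj (1 + qi) * Bmat n =
        Bmat n * blockAt n i (0 : ℍ[ℝ]) 1 (-1) 2 := by
  constructor
  · obtain ⟨m, rfl⟩ : ∃ m, n = m + 1 := ⟨n - 1, by omega⟩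
    exact bmat_isUnit m
  · intro i hi
    have hii : i < n := by omega
    refine Matrix.ext fun p q => ?_
    rw [blockAt_mul_apply i hi, mul_blockAt_apply i hi]
    by_cases hp : (p : ℕ) = i
    · have hpe : p = ⟨i, hii⟩ := Fin.ext hp
      subst hpe
      rw [if_pos hp]
      by_cases hq : (q : ℕ) = i
      · have hqe : q = ⟨i, hii⟩ := Fin.ext hq
        subst hqe
        rw [if_pos hq]
        rw [Bmat_apply_le i i hii hii (le_refl i),
            Bmat_apply_le (i + 1) i hi hii (by omega),
            Bmat_apply_gt i (i + 1) hii hi (by omega),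
            brow_eq_of_eq i (by omega)]
        trans ((1 + qi + -qj * (qk - qj)) * brow i ⟨i, by omega⟩)
        · noncomm_ring
        · rw [show 1 + qi + -qj * (qk - qj) = (0 : ℍ[ℝ]) from by ext <;> simp [Quaternion.re_mul, Quaternion.imI_mul, Quaternion.imJ_mul, Quaternion.imK_mul]]
          noncomm_ring
      · rw [if_neg hq]
        by_cases hq2 : (q : ℕ) = i + 1
        · have hqe : q = ⟨i + 1, hi⟩ := Fin.ext hq2
          subst hqe
          rw [if_pos hq2]
          rw [Bmat_apply_gt i (i + 1) hii hi (by omega),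
              Bmat_apply_le (i + 1) (i + 1) hi hi (le_refl _),
              Bmat_apply_le i i hii hii (le_refl i),
              brow_last i]
          trans ((-qj * qj) * brow i ⟨i, by omega⟩)
          · noncomm_ring
          · rw [show -qj * qj = (1 : ℍ[ℝ]) from by ext <;> simp [Quaternion.re_mul, Quaternion.imI_mul, Quaternion.imJ_mul, Quaternion.imK_mul]]
            noncomm_ring
        · rw [if_neg hq2]
          by_cases hql : (q : ℕ) ≤ i
          · have hqlt : (q : ℕ) < i := by omega
            rw [show Bmat n ⟨i, hii⟩ q = brow i ⟨(q : ℕ), by omega⟩ from by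
                  exact Bmat_apply_le i (q : ℕ) hii q.2 (by omega),
                show Bmat n ⟨i + 1, hi⟩ q = qk * brow i ⟨(q : ℕ), by omega⟩ from by
                  rw [Bmat_apply_le (i + 1) (q : ℕ) hi q.2 (by omega)]
                  exact brow_eq_of_lt i (q : ℕ) hqlt (by omega) (by omega)]
            trans ((1 + qi + -qj * qk) * brow i ⟨(q : ℕ), by omega⟩)
            · noncomm_ring
            · rw [show 1 + qi + -qj * qk = (1 : ℍ[ℝ]) from by ext <;> simp [Quaternion.re_mul, Quaternion.imI_mul, Quaternion.imJ_mul, Quaternion.imK_mul]]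
              noncomm_ring
          · have hqe : q = ⟨(q : ℕ), q.2⟩ := Fin.ext rfl
            rw [show Bmat n ⟨i, hii⟩ q = 0 from by
                  exact Bmat_apply_gt i (q : ℕ) hii q.2 (by omega),
                show Bmat n ⟨i + 1, hi⟩ q = 0 from by
                  exact Bmat_apply_gt (i + 1) (q : ℕ) hi q.2 (by omega)]
            noncomm_ring
    · rw [if_neg hp]
      by_cases hp2 : (p : ℕ) = i + 1
      · have hpe : p = ⟨i + 1, hi⟩ := Fin.ext hp2
        subst hpe
        rw [if_pos hp2]
        by_cases hq : (q : ℕ) = i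
        · have hqe : q = ⟨i, hii⟩ := Fin.ext hq
          subst hqe
          rw [if_pos hq]
          rw [Bmat_apply_le i i hii hii (le_refl i),
              Bmat_apply_le (i + 1) i hi hii (by omega),
              Bmat_apply_le (i + 1) (i + 1) hi hi (le_refl _),
              brow_eq_of_eq i (by omega), brow_last i]
          trans ((qj + (1 + qi) * (qk - qj)) * brow i ⟨i, by omega⟩)
          · noncomm_ring
          · rw [show qj + (1 + qi) * (qk - qj) = -qj from by ext <;> simp [Quaternion.re_mul, Quaternion.imI_mul, Quaternion.imJ_mul, Quaternion.imK_mul]]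
            noncomm_ring
        · rw [if_neg hq]
          by_cases hq2 : (q : ℕ) = i + 1
          · have hqe : q = ⟨i + 1, hi⟩ := Fin.ext hq2
            subst hqe
            rw [if_pos hq2]
            rw [Bmat_apply_gt i (i + 1) hii hi (by omega),
                Bmat_apply_le (i + 1) (i + 1) hi hi (le_refl _),
                Bmat_apply_le (i + 1) i hi hii (by omega),
                brow_eq_of_eq i (by omega), brow_last i]
            trans (((1 + qi) * qj) * brow i ⟨i, by omega⟩)
            · noncomm_ring
            · rw [show (1 + qi) * qj = qk + qj from by ext <;> simp [Quaternion.re_mul, Quaternion.imI_mul, Quaternion.imJ_mul, Quaternion.imK_mul]]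
              noncomm_ring
          · rw [if_neg hq2]
            by_cases hql : (q : ℕ) ≤ i
            · have hqlt : (q : ℕ) < i := by omega
              have hqe : q = ⟨(q : ℕ), q.2⟩ := Fin.ext rfl
              rw [show Bmat n ⟨i, hii⟩ q = brow i ⟨(q : ℕ), by omega⟩ from by
                    exact Bmat_apply_le i (q : ℕ) hii q.2 (by omega),
                  show Bmat n ⟨i + 1, hi⟩ q = qk * brow i ⟨(q : ℕ), by omega⟩ from by
                    rw [Bmat_apply_le (i + 1) (q : ℕ) hi q.2 (by omega)]
                    exact brow_eq_of_lt i (q : ℕ) hqlt (by omega) (by omega)]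
              trans ((qj + (1 + qi) * qk) * brow i ⟨(q : ℕ), by omega⟩)
              · noncomm_ring
              · rw [show qj + (1 + qi) * qk = qk from by ext <;> simp [Quaternion.re_mul, Quaternion.imI_mul, Quaternion.imJ_mul, Quaternion.imK_mul]]
            · have hqe : q = ⟨(q : ℕ), q.2⟩ := Fin.ext rfl
              rw [show Bmat n ⟨i, hii⟩ q = 0 from by
                    exact Bmat_apply_gt i (q : ℕ) hii q.2 (by omega),
                  show Bmat n ⟨i + 1, hi⟩ q = 0 from by
                    exact Bmat_apply_gt (i + 1) (q : ℕ) hi q.2 (by omega)]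
              noncomm_ring
      · rw [if_neg hp2]
        have hpe : p = ⟨(p : ℕ), p.2⟩ := Fin.ext rfl
        by_cases hq : (q : ℕ) = i
        · have hqe : q = ⟨i, hii⟩ := Fin.ext hq
          subst hqe
          rw [if_pos hq]
          by_cases hpl : (p : ℕ) < i
          · rw [show Bmat n p ⟨i, hii⟩ = 0 from by
                  exact Bmat_apply_gt (p : ℕ) i p.2 hii (by omega),
                show Bmat n p ⟨i + 1, hi⟩ = 0 from by
                  exact Bmat_apply_gt (p : ℕ) (i + 1) p.2 hi (by omega)]
            noncomm_ring
          · have hpg : i + 2 ≤ (p : ℕ) := by omega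
            rw [show Bmat n p ⟨i, hii⟩ = brow (p : ℕ) ⟨i, by omega⟩ from by
                  exact Bmat_apply_le (p : ℕ) i p.2 hii (by omega),
                show Bmat n p ⟨i + 1, hi⟩ = brow (p : ℕ) ⟨i + 1, by omega⟩ from by
                  exact Bmat_apply_le (p : ℕ) (i + 1) p.2 hi (by omega),
                brow_alt i (p : ℕ) hpg (by omega) (by omega)]
            noncomm_ring
        · rw [if_neg hq]
          by_cases hq2 : (q : ℕ) = i + 1
          · have hqe : q = ⟨i + 1, hi⟩ := Fin.ext hq2
            subst hqe
            rw [if_pos hq2]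
            by_cases hpl : (p : ℕ) < i
            · rw [show Bmat n p ⟨i + 1, hi⟩ = 0 from by
                    exact Bmat_apply_gt (p : ℕ) (i + 1) p.2 hi (by omega),
                  show Bmat n p ⟨i, hii⟩ = 0 from by
                    exact Bmat_apply_gt (p : ℕ) i p.2 hii (by omega)]
              noncomm_ring
            · have hpg : i + 2 ≤ (p : ℕ) := by omega
              rw [show Bmat n p ⟨i, hii⟩ = brow (p : ℕ) ⟨i, by omega⟩ from by
                    exact Bmat_apply_le (p : ℕ) i p.2 hii (by omega),
                  show Bmat n p ⟨i + 1, hi⟩ = brow (p : ℕ) ⟨i + 1, by omega⟩ from by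
                    exact Bmat_apply_le (p : ℕ) (i + 1) p.2 hi (by omega),
                  brow_alt i (p : ℕ) hpg (by omega) (by omega)]
              noncomm_ring
          · rw [if_neg hq2]
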